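/- For every integer n ≥ 2, one has (2/(ζ(n)·ξ(n−1)))^{1/(2n−2)} ≤ 2e/(n−1). -/

import Mathlib

/-! Writing `ζ(k) = ⌊k/2⌋! ⌊(k-1)/2⌋!`, one has `4 ξ(k+2) = ζ(k+1)` and `ζ` is log-convex, so
`4 ζ(n) ξ(n-1) ≥ ζ(n-1)²` for `n ≥ 3`. Stirling's lower bound `k! ≥ √(2πk) (k/e)^k` gives
`ζ(N) ≥ π (N/(2e))^N` for `N ≥ 2` (for odd `N` after absorbing the half-step shift through
`(1 + 1/(N-1))^(N-1) ≤ e`), and since `π² ≥ 8` this yields `ζ(n) ξ(n-1) ≥ 2 ((n-1)/(2e))^(2n-2)`;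
the claim is its `(2n-2)`-th root. -/

/-- `ζ(k) = (((k−1)/2)!)²` for odd `k`, and `ζ(k) = (k/2)!((k−2)/2)!` for even `k`. -/
noncomputable def zeta (k : ℕ) : ℝ :=
  if k % 2 = 1 then ((((k - 1) / 2).factorial : ℝ)) ^ 2
  else ((k / 2).factorial : ℝ) * (((k - 2) / 2).factorial : ℝ)

/-- `ξ(1) = 1/2`, `ξ(k) = ((k−1)/2)!((k−3)/2)!/4` for odd `k ≥ 3`, and
`ξ(k) = (((k−2)/2)!)²/4` for even `k`. -/
noncomputable def xi (k : ℕ) : ℝ :=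
  if k = 1 then 1 / 2
  else if k % 2 = 1 then (((k - 1) / 2).factorial : ℝ) * (((k - 3) / 2).factorial : ℝ) / 4
  else ((((k - 2) / 2).factorial : ℝ)) ^ 2 / 4

open Real
open scoped Nat

lemma two_pi_mul_pow_le_factorial_sq (n : ℕ) :
    2 * π * n * ((n : ℝ) / exp 1) ^ (2 * n) ≤ (n ! : ℝ) ^ 2 := by
  have h := pow_le_pow_left₀ (by positivity) (Stirling.le_factorial_stirling n) 2
  rwa [mul_pow, sq_sqrt (by positivity), ← pow_mul, mul_comm n 2] at h

lemma two_pi_mul_pow_le_factorial_mul_factorial (k : ℕ) :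
    2 * π * (((k : ℝ) + 1) / exp 1) ^ (2 * (k + 1)) ≤ ((k + 1)! : ℝ) * k ! := by
  have h := two_pi_mul_pow_le_factorial_sq (k + 1)
  rw [Nat.factorial_succ] at h ⊢
  push_cast at h ⊢
  have hk : (0 : ℝ) < k + 1 := by positivity
  nlinarith

lemma zeta_two_mul_add_one (k : ℕ) : zeta (2 * k + 1) = (k ! : ℝ) ^ 2 := by
  rw [zeta, if_pos (by omega), show (2 * k + 1 - 1) / 2 = k by omega]

lemma zeta_two_mul_add_two (k : ℕ) : zeta (2 * k + 2) = ((k + 1)! : ℝ) * k ! := by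
  rw [zeta, if_neg (by omega), show (2 * k + 2) / 2 = k + 1 by omega,
    show (2 * k + 2 - 2) / 2 = k by omega]

lemma xi_add_two (k : ℕ) : xi (k + 2) = zeta (k + 1) / 4 := by
  rcases Nat.even_or_odd' k with ⟨j, rfl | rfl⟩
  · rw [zeta_two_mul_add_one, xi, if_neg (by omega), if_neg (by omega),
      show (2 * j + 2 - 2) / 2 = j by omega]
  · rw [show 2 * j + 1 + 1 = 2 * j + 2 by ring, zeta_two_mul_add_two, xi, if_neg (by omega),
      if_pos (by omega), show (2 * j + 1 + 2 - 1) / 2 = j + 1 by omega,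
      show (2 * j + 1 + 2 - 3) / 2 = j by omega]

lemma zeta_sq_le_mul (k : ℕ) : zeta (k + 2) ^ 2 ≤ zeta (k + 3) * zeta (k + 1) := by
  rcases Nat.even_or_odd' k with ⟨j, rfl | rfl⟩
  · rw [zeta_two_mul_add_two, show 2 * j + 3 = 2 * (j + 1) + 1 by ring, zeta_two_mul_add_one,
      zeta_two_mul_add_one]
    exact le_of_eq (by ring)
  · rw [show 2 * j + 1 + 2 = 2 * (j + 1) + 1 by ring, zeta_two_mul_add_one,
      show 2 * j + 1 + 3 = 2 * (j + 1) + 2 by ring, zeta_two_mul_add_two,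
      show 2 * j + 1 + 1 = 2 * j + 2 by ring, zeta_two_mul_add_two]
    have hsucc : ((j + 2)! : ℝ) = (j + 2) * (j + 1)! := by push_cast [Nat.factorial_succ]; ring
    have hsucc' : ((j + 1)! : ℝ) = (j + 1) * j ! := by push_cast [Nat.factorial_succ]; ring
    have hpos : (0 : ℝ) ≤ ((j + 1)! : ℝ) ^ 3 * j ! := by positivity
    rw [hsucc]
    linear_combination hpos + ((j + 1)! : ℝ) ^ 3 * hsucc'

lemma pi_mul_pow_le_zeta_two_mul_add_three (k : ℕ) :
    π * ((2 * k + 3 : ℝ) / (2 * exp 1)) ^ (2 * k + 3) ≤ zeta (2 * k + 3) := by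
  have hstirling := two_pi_mul_pow_le_factorial_sq (k + 1)
  push_cast at hstirling
  set x : ℝ := (k + 1) / exp 1 with hx
  have hbase : (2 * k + 3 : ℝ) / (2 * exp 1) = x * (1 + ((2 * k + 2 : ℕ) : ℝ)⁻¹) := by
    rw [hx]; push_cast; field_simp; ring
  rw [show 2 * k + 3 = 2 * (k + 1) + 1 by ring, zeta_two_mul_add_one]
  calc π * ((2 * k + 3 : ℝ) / (2 * exp 1)) ^ (2 * (k + 1) + 1)
      = π * (x ^ (2 * (k + 1)) * (1 + ((2 * k + 2 : ℕ) : ℝ)⁻¹) ^ (2 * k + 2))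
          * ((2 * k + 3) / (2 * exp 1)) := by
        rw [pow_succ, hbase, mul_pow, show 2 * (k + 1) = 2 * k + 2 by ring]; ring
    _ ≤ π * (x ^ (2 * (k + 1)) * exp 1) * ((2 * k + 3) / (2 * exp 1)) := by
        gcongr; exact one_add_inv_pow_le_exp
    _ = π * (2 * k + 3) / 2 * x ^ (2 * (k + 1)) := by field_simp
    _ ≤ 2 * π * (k + 1) * x ^ (2 * (k + 1)) := by gcongr; nlinarith [pi_pos]
    _ ≤ ((k + 1)! : ℝ) ^ 2 := hstirling

lemma pi_mul_pow_le_zeta {N : ℕ} (hN : 2 ≤ N) : π * ((N : ℝ) / (2 * exp 1)) ^ N ≤ zeta N := by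
  obtain ⟨k, rfl | rfl⟩ : ∃ k, N = 2 * k + 2 ∨ N = 2 * k + 3 := ⟨(N - 2) / 2, by omega⟩
  · have hpair := two_pi_mul_pow_le_factorial_mul_factorial k
    rw [zeta_two_mul_add_two, show 2 * k + 2 = 2 * (k + 1) by ring]
    have hbase : ((2 * (k + 1) : ℕ) : ℝ) / (2 * exp 1) = (k + 1) / exp 1 := by
      push_cast; field_simp
    rw [hbase]
    nlinarith [pi_pos, pow_nonneg (by positivity : (0 : ℝ) ≤ (k + 1) / exp 1) (2 * (k + 1))]
  · push_cast
    exact pi_mul_pow_le_zeta_two_mul_add_three k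

lemma two_mul_pow_le_zeta_mul_xi {m : ℕ} (hm : 1 ≤ m) :
    2 * ((m : ℝ) / (2 * exp 1)) ^ (2 * m) ≤ zeta (m + 1) * xi m := by
  rcases hm.eq_or_lt with rfl | hm
  · have he : (exp 1)⁻¹ ≤ 1 := inv_le_one_of_one_le₀ (one_le_exp zero_le_one)
    have hz : zeta 2 = 1 := by norm_num [zeta]
    have hx : xi 1 = 1 / 2 := by norm_num [xi]
    norm_num [hz, hx]
    nlinarith [inv_pos.2 (exp_pos 1)]
  · obtain ⟨k, rfl⟩ : ∃ k, m = k + 2 := ⟨m - 2, by omega⟩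
    have hpi : 8 ≤ π ^ 2 := by nlinarith [pi_gt_three]
    have hzeta := pi_mul_pow_le_zeta (N := k + 2) (by omega)
    have hsq := pow_le_pow_left₀ (by positivity) hzeta 2
    rw [xi_add_two, ← mul_div_assoc, le_div_iff₀ (by norm_num)]
    calc 2 * (((k + 2 : ℕ) : ℝ) / (2 * exp 1)) ^ (2 * (k + 2)) * 4
        ≤ (π * (((k + 2 : ℕ) : ℝ) / (2 * exp 1)) ^ (k + 2)) ^ 2 := by
          rw [mul_pow, ← pow_mul, mul_comm (k + 2) 2]
          nlinarith [pow_nonneg (by positivity : (0 : ℝ) ≤ ((k + 2 : ℕ) : ℝ) / (2 * exp 1))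
            (2 * (k + 2))]
      _ ≤ zeta (k + 2) ^ 2 := hsq
      _ ≤ zeta (k + 3) * zeta (k + 1) := zeta_sq_le_mul k

lemma rpow_inv_le_inv_of_mul_pow_le {a x P : ℝ} {k : ℕ} (ha : 0 < a) (hx : 0 < x) (hk : 0 < k)
    (h : a * x ^ k ≤ P) : (a / P) ^ ((k : ℝ)⁻¹) ≤ x⁻¹ := by
  have hP : 0 < P := lt_of_lt_of_le (by positivity) h
  rw [rpow_inv_le_iff_of_pos (by positivity) (by positivity) (by positivity), rpow_natCast,
    inv_pow, div_le_iff₀ hP, inv_mul_eq_div, le_div_iff₀ (by positivity)]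
  exact h

theorem zeta_xi_bound (n : ℕ) (hn : 2 ≤ n) :
    (2 / (zeta n * xi (n - 1))) ^ (1 / (2 * (n : ℝ) - 2))
      ≤ 2 * Real.exp 1 / ((n : ℝ) - 1) := by
  obtain ⟨m, rfl⟩ : ∃ m, n = m + 1 := ⟨n - 1, by omega⟩
  have hm : 1 ≤ m := by omega
  have key := rpow_inv_le_inv_of_mul_pow_le two_pos (by positivity) (by omega)
    (two_mul_pow_le_zeta_mul_xi hm)
  rw [inv_div] at key
  convert key using 2 <;> push_cast <;> ring_nf
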